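/- At K_c = arctanh(√2 − 1), the Ising partition function satisfies log Z(K_c) = (1/2) log 2 + 2G/π, where G is Catalan's constant. -/

import Mathlib

open Real

/-- Inverse hyperbolic tangent. -/
noncomputable def arctanh (x : ℝ) : ℝ := (1/2) * Real.log ((1+x)/(1-x))

noncomputable def catalanG : ℝ := ∑' n : ℕ, (-1 : ℝ)^n / (2*n+1)^2

noncomputable def logZ (K : ℝ) : ℝ :=
  Real.log (2 * Real.cosh (2*K)) + (1 / (8*π^2)) *
    (∫ k₁ in (-π)..π, ∫ k₂ in (-π)..π,
      Real.log (1 - ((2 * Real.tanh (2*K) / Real.cosh (2*K)) / 2) *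
        (Real.cos k₁ + Real.cos k₂)))

open MeasureTheory intervalIntegral Set


lemma pointwise_log_series {r : ℝ} (hr : |r| < 1) (v : ℝ) :
    Real.log (1 - 2*r*Real.cos v + r^2)
      = ∑' n : ℕ, (-2) * (r^n * Real.cos (n*v) / n) := by
  set z : ℂ := (r : ℂ) * Complex.exp (v * Complex.I) with hz
  have hznorm : ‖z‖ < 1 := by
    rw [hz, norm_mul, Complex.norm_exp]
    simpa [Complex.norm_real] using hr
  have hne : (1 : ℂ) - z ≠ 0 := by
    intro h
    have : ‖(1:ℂ)‖ = ‖z‖ := by rw [sub_eq_zero] at h; rw [h]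
    simp at this; rw [this] at hznorm; exact lt_irrefl _ hznorm
  have habs : Complex.normSq (1 - z) = 1 - 2*r*Real.cos v + r^2 := by
    have h1 : (1 - z).re = 1 - r * Real.cos v := by
      simp [hz, Complex.sub_re, Complex.mul_re, Complex.exp_ofReal_mul_I_re,
        Complex.exp_ofReal_mul_I_im]
    have h2 : (1 - z).im = -(r * Real.sin v) := by
      simp [hz, Complex.sub_im, Complex.mul_im, Complex.exp_ofReal_mul_I_re,
        Complex.exp_ofReal_mul_I_im]
    rw [Complex.normSq_apply, h1, h2]
    have := Real.sin_sq_add_cos_sq v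
    ring_nf
    nlinarith [Real.sin_sq_add_cos_sq v]
  have hsum := Complex.hasSum_taylorSeries_neg_log hznorm
  have hre := hsum.mapL Complex.reCLM
  have hterm : ∀ n : ℕ, Complex.reCLM (z ^ n / n) = r^n * Real.cos (n*v) / n := by
    intro n
    have : z ^ n = ((r^n : ℝ) : ℂ) * Complex.exp ((n * v : ℝ) * Complex.I) := by
      rw [hz, mul_pow, ← Complex.exp_nat_mul]
      push_cast; ring_nf
    rw [this]
    have : ((r^n : ℝ) : ℂ) * Complex.exp ((n * v : ℝ) * Complex.I) / (n : ℂ)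
        = ((r^n / n : ℝ) : ℂ) * Complex.exp ((n * v : ℝ) * Complex.I) := by
      push_cast; ring
    rw [this]
    show (((r ^ n / n : ℝ) : ℂ) * Complex.exp ((n * v : ℝ) * Complex.I)).re = _
    rw [Complex.re_ofReal_mul, Complex.exp_ofReal_mul_I_re]
    ring
  simp only [hterm] at hre
  have hval : Complex.reCLM (-Complex.log (1 - z)) = -Real.log ‖1 - z‖ := by
    simp [Complex.log_re]
  rw [hval] at hre
  have := (hre.mul_left (-2)).tsum_eq
  rw [this]
  have habs' : Real.log (1 - 2*r*Real.cos v + r^2) = 2 * Real.log ‖1 - z‖ := by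
    rw [← habs, Complex.normSq_eq_norm_sq, Real.log_pow]
    push_cast; ring
  rw [habs']
  ring

lemma integral_log_one_sub_two_cos (r : ℝ) (hr : |r| < 1) :
    ∫ v in (-π)..π, Real.log (1 - 2*r*Real.cos v + r^2) = 0 := by
  have hple : -π ≤ π := by linarith [Real.pi_pos]
  have hcont : ∀ n : ℕ, Continuous (fun v : ℝ => (-2) * (r^n * Real.cos (n*v) / n)) := by
    intro n; fun_prop
  have hInt : ∀ n : ℕ, Integrable (fun v : ℝ => (-2) * (r^n * Real.cos (n*v) / n))
      (volume.restrict (Ioc (-π) π)) := by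
    intro n
    exact ((hcont n).integrableOn_Ioc : IntegrableOn _ (Ioc (-π) π) volume)
  have hbound : ∀ n : ℕ, ∀ v : ℝ, ‖(-2) * (r^n * Real.cos (n*v) / n)‖ ≤ 2 * |r|^n := by
    intro n v
    rcases Nat.eq_zero_or_pos n with h0 | hn
    · subst h0; simp
    rw [norm_mul, norm_neg]
    simp only [norm_div, norm_mul, Real.norm_eq_abs]
    have h1 : |Real.cos (n*v)| ≤ 1 := Real.abs_cos_le_one _
    have h2 : (1:ℝ) ≤ |(n:ℝ)| := by
      rw [abs_of_nonneg (by positivity)]; exact_mod_cast hn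
    have h3 : |r^n| = |r|^n := abs_pow r n
    have : |r ^ n| * |Real.cos (↑n * v)| / |(n:ℝ)| ≤ |r|^n := by
      rw [div_le_iff₀ (by linarith)]
      calc |r ^ n| * |Real.cos (↑n * v)| ≤ |r|^n * 1 := by
            rw [h3]; exact mul_le_mul_of_nonneg_left h1 (by positivity)
        _ ≤ |r|^n * |(n:ℝ)| := by
            rw [mul_one]; exact le_mul_of_one_le_right (by positivity) h2
    rw [abs_two]
    exact mul_le_mul_of_nonneg_left this (by norm_num)
  have hSum : Summable fun n : ℕ => ∫ v in Ioc (-π) π, ‖(-2) * (r^n * Real.cos (n*v) / n)‖ := by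
    apply Summable.of_nonneg_of_le
      (fun n => integral_nonneg (fun v => norm_nonneg _))
      (fun n => ?_)
      (((summable_geometric_of_lt_one (abs_nonneg r) hr).mul_left (2 * (2*π))))
    calc ∫ v in Ioc (-π) π, ‖(-2) * (r^n * Real.cos (n*v) / n)‖
        ≤ ∫ _v in Ioc (-π) π, 2 * |r|^n := by
          apply integral_mono_of_nonneg
          · exact Filter.Eventually.of_forall (fun v => norm_nonneg _)
          · exact integrableOn_const measure_Ioc_lt_top.ne
          · exact Filter.Eventually.of_forall (fun v => hbound n v)
      _ = 2 * (2*π) * |r|^n := by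
          rw [setIntegral_const]
          simp [Real.volume_Ioc]
          rw [max_eq_left (by linarith)]
          ring
  have hterm : ∀ n : ℕ, (∫ v in Ioc (-π) π, (-2) * (r^n * Real.cos (n*v) / n)) = 0 := by
    intro n
    rcases Nat.eq_zero_or_pos n with h0 | hn
    · subst h0; simp
    have hn' : (n:ℝ) ≠ 0 := by positivity
    have : (∫ v in Ioc (-π) π, (-2) * (r^n * Real.cos (n*v) / n))
        = (-2) * (r^n / n) * ∫ v in (-π)..π, Real.cos (n*v) := by
      rw [intervalIntegral.integral_of_le hple, ← MeasureTheory.integral_const_mul]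
      congr 1; ext v; ring
    rw [this, intervalIntegral.integral_comp_mul_left (fun x => Real.cos x) hn',
      integral_cos]
    have h1 : Real.sin ((n:ℝ) * π) = 0 := Real.sin_nat_mul_pi n
    have h2 : Real.sin ((n:ℝ) * (-π)) = 0 := by
      rw [show (n:ℝ) * (-π) = -((n:ℝ)*π) by ring, Real.sin_neg, h1, neg_zero]
    rw [h1, h2]
    simp
  rw [intervalIntegral.integral_of_le hple]
  calc ∫ v in Ioc (-π) π, Real.log (1 - 2*r*Real.cos v + r^2)
      = ∫ v in Ioc (-π) π, ∑' n : ℕ, (-2) * (r^n * Real.cos (n*v) / n) := by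
        simp_rw [pointwise_log_series hr]
    _ = ∑' n : ℕ, ∫ v in Ioc (-π) π, (-2) * (r^n * Real.cos (n*v) / n) :=
        (integral_tsum_of_summable_integral_norm hInt hSum).symm
    _ = 0 := by rw [tsum_congr hterm]; exact tsum_zero

lemma inner_integral (a : ℝ) (ha : 1/2 < a) :
    ∫ v in (-π)..π, Real.log (a - 1/2 * Real.cos v)
      = 2*π*Real.log ((2*a + Real.sqrt (4*a^2-1))/4) := by
  set w := Real.sqrt (4*a^2-1) with hw
  have hw0 : 0 ≤ w := Real.sqrt_nonneg _
  have hwsq : w^2 = 4*a^2-1 := Real.sq_sqrt (by nlinarith)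
  set r := 2*a - w with hrdef
  have hrpos : 0 < r := by
    have : w < 2*a := by
      rw [hw, Real.sqrt_lt' (by linarith)]
      nlinarith
    linarith
  have hrlt : r < 1 := by
    have : 2*a - 1 < w := by
      rw [hw, Real.lt_sqrt (by linarith)]
      nlinarith
    linarith
  have hkey : 1 + r^2 = 4*a*r := by nlinarith
  have hrinv : (4*r)⁻¹ = (2*a + w)/4 := by
    have h1 : r * (2*a + w) = 1 := by nlinarith
    field_simp
    nlinarith
  have hpt : ∀ v : ℝ, Real.log (a - 1/2 * Real.cos v)
      = Real.log ((4*r)⁻¹) + Real.log (1 - 2*r*Real.cos v + r^2) := by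
    intro v
    have hc := Real.neg_one_le_cos v
    have hc' := Real.cos_le_one v
    have hpos : 0 < a - 1/2 * Real.cos v := by nlinarith
    have hpos2 : 0 < 1 - 2*r*Real.cos v + r^2 := by nlinarith
    rw [← Real.log_mul (by positivity) (by positivity)]
    congr 1
    field_simp
    nlinarith
  calc ∫ v in (-π)..π, Real.log (a - 1/2 * Real.cos v)
      = ∫ v in (-π)..π, (Real.log ((4*r)⁻¹) + Real.log (1 - 2*r*Real.cos v + r^2)) := by
        simp_rw [hpt]
    _ = (∫ _v in (-π)..π, Real.log ((4*r)⁻¹))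
        + ∫ v in (-π)..π, Real.log (1 - 2*r*Real.cos v + r^2) := by
        apply intervalIntegral.integral_add
        · exact intervalIntegrable_const
        · apply ContinuousOn.intervalIntegrable
          apply ContinuousOn.log
          · exact (by fun_prop : Continuous fun v : ℝ => 1 - 2*r*Real.cos v + r^2).continuousOn
          · intro v _
            have hc := Real.neg_one_le_cos v
            have hc' := Real.cos_le_one v
            nlinarith
    _ = 2*π*Real.log ((2*a + w)/4) := by
        rw [integral_log_one_sub_two_cos r (by rw [abs_of_pos hrpos]; exact hrlt),
          intervalIntegral.integral_const]
        rw [hrinv, add_zero, smul_eq_mul]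
        ring

lemma inner_integral' (k : ℝ) (hk : Real.cos k < 1) :
    ∫ v in (-π)..π, Real.log (1 - 1/2 * (Real.cos k + Real.cos v))
      = 4*π*(Real.arsinh |Real.sin (k/2)| - Real.log 2) := by
  set a : ℝ := 1 - 1/2 * Real.cos k with hadef
  have ha : 1/2 < a := by rw [hadef]; linarith
  have step1 : ∫ v in (-π)..π, Real.log (1 - 1/2 * (Real.cos k + Real.cos v))
      = ∫ v in (-π)..π, Real.log (a - 1/2 * Real.cos v) := by
    apply intervalIntegral.integral_congr
    intro v _
    congr 1
    rw [hadef]; ring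
  rw [step1, inner_integral a ha]
  -- now pure algebra
  set y : ℝ := |Real.sin (k/2)| with hy
  have hy0 : 0 ≤ y := abs_nonneg _
  have hysq : y^2 = 1/2 - 1/2 * Real.cos k := by
    rw [hy, sq_abs]
    have := Real.sin_sq_eq_half_sub (k/2)
    rw [show 2*(k/2) = k by ring] at this
    linarith
  have hwsqrt : Real.sqrt (1 + y^2) = Real.sqrt (1 + y^2) := rfl
  set u : ℝ := Real.sqrt (1 + y^2) with hu
  have hu0 : 0 ≤ u := Real.sqrt_nonneg _
  have husq : u^2 = 1 + y^2 := Real.sq_sqrt (by positivity)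
  have e1 : a = 1/2 + y^2 := by rw [hadef]; linarith
  have hsqrt : Real.sqrt (4*a^2-1) = 2*y*u := by
    rw [show 4*a^2-1 = (2*y*u)^2 by rw [e1]; linear_combination (-4*y^2)*husq]
    exact Real.sqrt_sq (by positivity)
  have harg : (2*a + Real.sqrt (4*a^2-1))/4 = ((y+u)/2)^2 := by
    rw [hsqrt, e1]; linear_combination (-1/4)*husq
  have hyu : 0 < y + u := by nlinarith
  rw [harg, Real.log_pow]
  have hlog : Real.log ((y+u)/2) = Real.arsinh y - Real.log 2 := by
    rw [Real.arsinh, ← hu, Real.log_div (by positivity) (by norm_num)]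
  rw [hlog]
  push_cast
  ring

lemma arctan_div_eq (x : ℝ) (hx : 0 < x) :
    Real.arctan x / x = ∫ y in Ioo (0:ℝ) 1, (1 + (x*y)^2)⁻¹ := by
  rw [← integral_Ioc_eq_integral_Ioo,
    ← intervalIntegral.integral_of_le (by norm_num : (0:ℝ) ≤ 1)]
  have hderiv : ∀ y ∈ uIcc (0:ℝ) 1,
      HasDerivAt (fun y => x⁻¹ * Real.arctan (x*y)) ((1 + (x*y)^2)⁻¹) y := by
    intro y _
    have h1 : HasDerivAt (fun y : ℝ => x*y) x y := by
      simpa using (hasDerivAt_id y).const_mul x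
    have h2 := (Real.hasDerivAt_arctan (x*y)).comp y h1
    have h3 := h2.const_mul x⁻¹
    refine h3.congr_deriv ?_
    field_simp
  have hint : IntervalIntegrable (fun y : ℝ => (1 + (x*y)^2)⁻¹) volume 0 1 := by
    apply Continuous.intervalIntegrable
    have h : ∀ y : ℝ, (1:ℝ) + (x*y)^2 ≠ 0 := fun y => by positivity
    exact (continuous_const.add ((continuous_const.mul continuous_id).pow 2)).inv₀ h
  rw [intervalIntegral.integral_eq_sub_of_hasDerivAt hderiv hint]
  simp only [mul_one, mul_zero, Real.arctan_zero]
  field_simp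
  ring

lemma summable_inv_sq : Summable (fun n : ℕ => ((2*(n:ℝ)+1)^2)⁻¹) := by
  have base : Summable (fun n : ℕ => ((n:ℝ)^2)⁻¹) :=
    Real.summable_nat_pow_inv.mpr (by norm_num)
  have h1 : Summable (fun n : ℕ => (((n:ℝ)+1)^2)⁻¹) := by
    have := (summable_nat_add_iff (f := fun n : ℕ => ((n:ℝ)^2)⁻¹) 1).mpr base
    simpa using this
  apply Summable.of_nonneg_of_le (fun n => by positivity) ?_ h1
  intro n
  apply inv_anti₀ (by positivity)
  nlinarith [Nat.cast_nonneg (α := ℝ) n]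

lemma pow_integral : ∀ n : ℕ, (∫ x in Ioc (0:ℝ) 1, x^(2*n)) = (2*(n:ℝ)+1)⁻¹ := by
  intro n
  rw [← intervalIntegral.integral_of_le (by norm_num : (0:ℝ) ≤ 1), integral_pow]
  push_cast
  rw [one_pow, zero_pow (by positivity)]
  ring

lemma catalan_integral : ∫ x in Ioc (0:ℝ) 1, Real.arctan x / x = catalanG := by
  set μ := volume.restrict (Ioc (0:ℝ) 1) with hμ
  set ν := volume.restrict (Ioo (0:ℝ) 1) with hν
  set M := μ.prod ν with hM
  haveI hμfin : IsFiniteMeasure μ :=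
    ⟨by rw [hμ, Measure.restrict_apply_univ]; exact measure_Ioc_lt_top⟩
  haveI hνfin : IsFiniteMeasure ν :=
    ⟨by rw [hν, Measure.restrict_apply_univ]; exact measure_Ioo_lt_top⟩
  haveI hMfin : IsFiniteMeasure M := by rw [hM]; infer_instance
  have hC : Continuous (fun p : ℝ × ℝ => (1 + (p.1*p.2)^2)⁻¹) := by
    have h : ∀ p : ℝ × ℝ, (1:ℝ) + (p.1*p.2)^2 ≠ 0 := fun p => by positivity
    exact (continuous_const.add (((continuous_fst.mul continuous_snd)).pow 2)).inv₀ h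
  have hIntM : Integrable (fun p : ℝ × ℝ => (1 + (p.1*p.2)^2)⁻¹) M := by
    apply Integrable.mono' (integrable_const (1:ℝ)) hC.aestronglyMeasurable
    filter_upwards with p
    rw [Real.norm_eq_abs, abs_of_pos (by positivity), inv_le_one_iff₀]
    right; nlinarith [sq_nonneg (p.1*p.2)]
  have hprodset : M = (volume.prod volume).restrict (Ioc (0:ℝ) 1 ×ˢ Ioo (0:ℝ) 1) := by
    rw [hM, hμ, hν, Measure.prod_restrict]
  have hae : ∀ᵐ p ∂M, p ∈ Ioc (0:ℝ) 1 ×ˢ Ioo (0:ℝ) 1 := by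
    rw [hprodset]
    exact ae_restrict_mem (measurableSet_Ioc.prod measurableSet_Ioo)
  have hpt : ∀ p : ℝ × ℝ, p ∈ Ioc (0:ℝ) 1 ×ˢ Ioo (0:ℝ) 1 →
      (1 + (p.1*p.2)^2)⁻¹ = ∑' n : ℕ, (-(p.1*p.2)^2)^n := by
    rintro ⟨x, y⟩ ⟨hx, hy⟩
    have hxy : |(-(x*y)^2)| < 1 := by
      rw [abs_neg, abs_of_nonneg (sq_nonneg _)]
      have h1 : x*y < 1 := by nlinarith [hx.1, hx.2, hy.1, hy.2]
      have h2 : 0 < x*y := mul_pos hx.1 hy.1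
      nlinarith
    rw [tsum_geometric_of_abs_lt_one hxy]
    congr 1
    ring
  have hnorm : ∀ n : ℕ, ∀ p : ℝ × ℝ, ‖(-(p.1*p.2)^2)^n‖ = (fun x : ℝ => x^(2*n)) p.1 * (fun y : ℝ => y^(2*n)) p.2 := by
    intro n p
    rw [Real.norm_eq_abs, abs_pow, abs_neg, abs_of_nonneg (sq_nonneg _)]
    simp only
    ring
  have hFint : ∀ n : ℕ, Integrable (fun p : ℝ × ℝ => (-(p.1*p.2)^2)^n) M := by
    intro n
    apply Integrable.mono' (integrable_const (1:ℝ))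
    · exact ((((continuous_fst.mul continuous_snd).pow 2).neg.pow n)).aestronglyMeasurable
    filter_upwards [hae] with p hp
    rcases hp with ⟨hx, hy⟩
    rw [hnorm n p]
    have h1 : p.1^(2*n) ≤ 1 := pow_le_one₀ (le_of_lt hx.1) hx.2
    have h2 : p.2^(2*n) ≤ 1 := pow_le_one₀ (le_of_lt hy.1) (le_of_lt hy.2)
    have h3 : 0 ≤ p.1^(2*n) := pow_nonneg (le_of_lt hx.1) _
    have h4 : 0 ≤ p.2^(2*n) := pow_nonneg (le_of_lt hy.1) _
    nlinarith
  have pow_integral' : ∀ n : ℕ, (∫ y, y^(2*n) ∂ν) = (2*(n:ℝ)+1)⁻¹ := by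
    intro n
    rw [hν, ← integral_Ioc_eq_integral_Ioo]
    exact pow_integral n
  have hFnorm : ∀ n : ℕ, (∫ p, ‖(-(p.1*p.2)^2)^n‖ ∂M) = (2*(n:ℝ)+1)⁻¹ * (2*(n:ℝ)+1)⁻¹ := by
    intro n
    have h2 := MeasureTheory.integral_prod_mul (μ := μ) (ν := ν)
      (fun x : ℝ => x^(2*n)) (fun y : ℝ => y^(2*n))
    rw [integral_congr_ae (Filter.Eventually.of_forall (hnorm n)), hM, h2,
      pow_integral' n, hμ, pow_integral n]
  have hSum : Summable fun n : ℕ => ∫ p, ‖(-(p.1*p.2)^2)^n‖ ∂M := by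
    apply Summable.congr summable_inv_sq
    intro n
    rw [hFnorm n, sq, mul_inv]
  have hterm : ∀ n : ℕ, (∫ p, (-(p.1*p.2)^2)^n ∂M) = (-1:ℝ)^n / (2*(n:ℝ)+1)^2 := by
    intro n
    have hrw : ∀ p : ℝ × ℝ, (-(p.1*p.2)^2)^n
        = (-1:ℝ)^n * ((fun x : ℝ => x^(2*n)) p.1 * (fun y : ℝ => y^(2*n)) p.2) := by
      intro p
      simp only
      ring
    have h2 := MeasureTheory.integral_prod_mul (μ := μ) (ν := ν)
      (fun x : ℝ => x^(2*n)) (fun y : ℝ => y^(2*n))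
    rw [integral_congr_ae (Filter.Eventually.of_forall hrw), MeasureTheory.integral_const_mul, hM, h2,
      pow_integral' n, hμ, pow_integral n]
    have hne : (2*(n:ℝ)+1) ≠ 0 := by positivity
    field_simp
  have key := integral_tsum_of_summable_integral_norm hFint hSum
  calc (∫ x in Ioc (0:ℝ) 1, Real.arctan x / x)
      = ∫ x, (∫ y, (1 + (x*y)^2)⁻¹ ∂ν) ∂μ := by
        rw [hμ]
        exact setIntegral_congr_fun measurableSet_Ioc (fun x hx => arctan_div_eq x hx.1)
    _ = ∫ p, (1 + (p.1*p.2)^2)⁻¹ ∂M := (integral_prod _ hIntM).symm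
    _ = ∫ p, ∑' n : ℕ, (-(p.1*p.2)^2)^n ∂M := integral_congr_ae (hae.mono hpt)
    _ = ∑' n : ℕ, ∫ p, (-(p.1*p.2)^2)^n ∂M := key.symm
    _ = catalanG := by rw [tsum_congr hterm, catalanG]

lemma arsinh_eq_integral (t : ℝ) :
    Real.arsinh (Real.sin t)
      = ∫ x in (0:ℝ)..1, Real.sin t / Real.sqrt (1 + x^2 * Real.sin t^2) := by
  have hderiv : ∀ x ∈ uIcc (0:ℝ) 1, HasDerivAt (fun x => Real.arsinh (x * Real.sin t))
      (Real.sin t / Real.sqrt (1 + x^2 * Real.sin t^2)) x := by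
    intro x _
    have h1 : HasDerivAt (fun x : ℝ => x * Real.sin t) (Real.sin t) x :=
      hasDerivAt_mul_const _
    have h2 := (Real.hasDerivAt_arsinh (x * Real.sin t)).comp x h1
    refine h2.congr_deriv ?_
    rw [show (x*Real.sin t)^2 = x^2*Real.sin t^2 by ring]
    rw [div_eq_inv_mul]
  have hint : IntervalIntegrable
      (fun x : ℝ => Real.sin t / Real.sqrt (1 + x^2 * Real.sin t^2)) volume 0 1 := by
    apply Continuous.intervalIntegrable
    apply Continuous.div continuous_const
    · exact (continuous_const.add ((continuous_id.pow 2).mul continuous_const)).sqrt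
    · intro x
      exact ne_of_gt (Real.sqrt_pos.mpr (by positivity))
  rw [intervalIntegral.integral_eq_sub_of_hasDerivAt hderiv hint]
  simp

lemma inner_t_integral (x : ℝ) (hx : 0 < x) :
    (∫ t in (0:ℝ)..(π/2), Real.sin t / Real.sqrt (1 + x^2 * Real.sin t^2))
      = Real.arctan x / x := by
  set c := x / Real.sqrt (1+x^2) with hc
  have hs : 0 < Real.sqrt (1+x^2) := Real.sqrt_pos.mpr (by positivity)
  have hssq : (Real.sqrt (1+x^2))^2 = 1+x^2 := Real.sq_sqrt (by positivity)
  have hc0 : 0 < c := by rw [hc]; positivity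
  have hc1 : c < 1 := by
    rw [hc, div_lt_one hs]
    nlinarith
  have hcs : c * Real.sqrt (1+x^2) = x := by
    rw [hc]; field_simp
  have key : ∀ t : ℝ, Real.sqrt (1 + x^2*Real.sin t^2)
      = Real.sqrt (1+x^2) * Real.sqrt (1 - (c*Real.cos t)^2) := by
    intro t
    rw [← Real.sqrt_mul (by positivity)]
    congr 1
    have hpyth := Real.sin_sq_add_cos_sq t
    have hcsq : c^2 * (1+x^2) = x^2 := by nlinarith
    nlinarith [sq_nonneg (Real.cos t)]
  have hbound : ∀ t : ℝ, |c * Real.cos t| < 1 := by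
    intro t
    rw [abs_mul, abs_of_pos hc0]
    calc c * |Real.cos t| ≤ c * 1 :=
          mul_le_mul_of_nonneg_left (Real.abs_cos_le_one t) hc0.le
      _ < 1 := by linarith
  have hderiv : ∀ t ∈ uIcc (0:ℝ) (π/2),
      HasDerivAt (fun t => -(x⁻¹ * Real.arcsin (c * Real.cos t)))
        (Real.sin t / Real.sqrt (1 + x^2 * Real.sin t^2)) t := by
    intro t _
    have hb := hbound t
    have hne1 : c * Real.cos t ≠ -1 := by
      intro h; rw [h] at hb; simp at hb
    have hne2 : c * Real.cos t ≠ 1 := by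
      intro h; rw [h] at hb; simp at hb
    have h1 : HasDerivAt (fun t : ℝ => c * Real.cos t) (c * (-Real.sin t)) t :=
      (Real.hasDerivAt_cos t).const_mul c
    have h2 := (Real.hasDerivAt_arcsin hne1 hne2).comp t h1
    have h3 := (h2.const_mul x⁻¹).neg
    refine h3.congr_deriv ?_
    symm
    have habs : (c * Real.cos t)^2 < 1 := by
      have h := abs_lt.mp hb
      nlinarith [h.1, h.2]
    have h4 : (0:ℝ) < Real.sqrt (1 - (c*Real.cos t)^2) :=
      Real.sqrt_pos.mpr (by linarith)
    have hxc : x⁻¹ * c = (Real.sqrt (1+x^2))⁻¹ := by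
      rw [hc]; field_simp
    rw [key t]
    calc Real.sin t / (Real.sqrt (1+x^2) * Real.sqrt (1 - (c*Real.cos t)^2))
        = (x⁻¹ * c) * (Real.sin t / Real.sqrt (1 - (c*Real.cos t)^2)) := by
          rw [hxc]
          field_simp
      _ = -(x⁻¹ * (1 / Real.sqrt (1 - (c*Real.cos t)^2) * (c * -Real.sin t))) := by
          ring
  have hint : IntervalIntegrable
      (fun t : ℝ => Real.sin t / Real.sqrt (1 + x^2 * Real.sin t^2)) volume 0 (π/2) := by
    apply Continuous.intervalIntegrable
    apply Continuous.div Real.continuous_sin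
    · exact (continuous_const.add
        (continuous_const.mul (Real.continuous_sin.pow 2))).sqrt
    · intro t
      exact ne_of_gt (Real.sqrt_pos.mpr (by positivity))
  rw [intervalIntegral.integral_eq_sub_of_hasDerivAt hderiv hint]
  rw [Real.cos_pi_div_two, Real.cos_zero, mul_zero, Real.arcsin_zero, mul_one]
  rw [Real.arctan_eq_arcsin]
  rw [← hc]
  field_simp
  ring

lemma arsinh_sin_integral : (∫ t in (0:ℝ)..(π/2), Real.arsinh (Real.sin t)) = catalanG := by
  have hple : (0:ℝ) ≤ π/2 := by positivity
  have hcont2 : Continuous (fun p : ℝ × ℝ =>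
      Real.sin p.1 / Real.sqrt (1 + p.2^2 * Real.sin p.1^2)) := by
    apply Continuous.div (Real.continuous_sin.comp continuous_fst)
    · exact (continuous_const.add ((continuous_snd.pow 2).mul
        ((Real.continuous_sin.comp continuous_fst).pow 2))).sqrt
    · intro p
      exact ne_of_gt (Real.sqrt_pos.mpr (by positivity))
  haveI hμfin : IsFiniteMeasure (volume.restrict (Ioc (0:ℝ) (π/2))) :=
    ⟨by rw [Measure.restrict_apply_univ]; exact measure_Ioc_lt_top⟩
  haveI hνfin : IsFiniteMeasure (volume.restrict (Ioc (0:ℝ) 1)) :=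
    ⟨by rw [Measure.restrict_apply_univ]; exact measure_Ioc_lt_top⟩
  have hintprod : Integrable (Function.uncurry (fun t x : ℝ =>
      Real.sin t / Real.sqrt (1 + x^2 * Real.sin t^2)))
      ((volume.restrict (Ioc (0:ℝ) (π/2))).prod (volume.restrict (Ioc (0:ℝ) 1))) := by
    apply Integrable.mono' (integrable_const (1:ℝ))
    · exact hcont2.aestronglyMeasurable
    filter_upwards with p
    simp only [Function.uncurry]
    rw [Real.norm_eq_abs, abs_div, abs_of_nonneg (Real.sqrt_nonneg _)]
    have h1 : Real.sqrt 1 ≤ Real.sqrt (1 + p.2^2 * Real.sin p.1^2) :=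
      Real.sqrt_le_sqrt (by nlinarith [mul_nonneg (sq_nonneg p.2) (sq_nonneg (Real.sin p.1))])
    rw [Real.sqrt_one] at h1
    rw [div_le_one (by linarith)]
    calc |Real.sin p.1| ≤ 1 := Real.abs_sin_le_one p.1
      _ ≤ Real.sqrt (1 + p.2^2 * Real.sin p.1^2) := h1
  calc (∫ t in (0:ℝ)..(π/2), Real.arsinh (Real.sin t))
      = ∫ t in Ioc (0:ℝ) (π/2), (∫ x in Ioc (0:ℝ) 1,
          Real.sin t / Real.sqrt (1 + x^2 * Real.sin t^2)) := by
        rw [intervalIntegral.integral_of_le hple]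
        apply setIntegral_congr_fun measurableSet_Ioc
        intro t _
        show Real.arsinh (Real.sin t) = _
        rw [arsinh_eq_integral t, intervalIntegral.integral_of_le (by norm_num : (0:ℝ) ≤ 1)]
    _ = ∫ x in Ioc (0:ℝ) 1, (∫ t in Ioc (0:ℝ) (π/2),
          Real.sin t / Real.sqrt (1 + x^2 * Real.sin t^2)) :=
        integral_integral_swap hintprod
    _ = ∫ x in Ioc (0:ℝ) 1, Real.arctan x / x := by
        apply setIntegral_congr_fun measurableSet_Ioc
        intro x hx
        show (∫ t in Ioc (0:ℝ) (π/2), Real.sin t / Real.sqrt (1 + x^2 * Real.sin t^2)) = _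
        rw [← intervalIntegral.integral_of_le hple]
        exact inner_t_integral x hx.1
    _ = catalanG := catalan_integral

lemma outer_integral :
    (∫ k in (-π)..π, Real.arsinh |Real.sin (k/2)|) = 4 * catalanG := by
  have hcont : Continuous (fun t : ℝ => Real.arsinh |Real.sin t|) :=
    Real.continuous_arsinh.comp (Real.continuous_sin.abs)
  have h1 : (∫ k in (-π)..π, Real.arsinh |Real.sin (k/2)|)
      = (2:ℝ) • ∫ t in (-π/2)..(π/2), Real.arsinh |Real.sin t| := by
    have := intervalIntegral.integral_comp_div (a := -π) (b := π)
      (f := fun t : ℝ => Real.arsinh |Real.sin t|) (c := (2:ℝ)) two_ne_zero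
    rw [this]
  have h2 : (∫ t in (-π/2)..(0:ℝ), Real.arsinh |Real.sin t|)
      = ∫ t in (0:ℝ)..(π/2), Real.arsinh |Real.sin t| := by
    have := intervalIntegral.integral_comp_neg (a := (0:ℝ)) (b := π/2)
      (f := fun t : ℝ => Real.arsinh |Real.sin t|)
    simp only [Real.sin_neg, abs_neg, neg_zero] at this
    rw [show -π/2 = -(π/2) by ring, ← this]
  have h3 : (∫ t in (-π/2)..(π/2), Real.arsinh |Real.sin t|)
      = (∫ t in (-π/2)..(0:ℝ), Real.arsinh |Real.sin t|)
        + ∫ t in (0:ℝ)..(π/2), Real.arsinh |Real.sin t| :=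
    (intervalIntegral.integral_add_adjacent_intervals
      (hcont.intervalIntegrable _ _) (hcont.intervalIntegrable _ _)).symm
  have h4 : (∫ t in (0:ℝ)..(π/2), Real.arsinh |Real.sin t|)
      = ∫ t in (0:ℝ)..(π/2), Real.arsinh (Real.sin t) := by
    apply intervalIntegral.integral_congr
    intro t ht
    rw [uIcc_of_le (by positivity)] at ht
    show Real.arsinh |Real.sin t| = Real.arsinh (Real.sin t)
    rw [abs_of_nonneg (Real.sin_nonneg_of_nonneg_of_le_pi ht.1
      (le_trans ht.2 (by linarith [Real.pi_pos])))]
  rw [h1, h3, h2, h4, arsinh_sin_integral, smul_eq_mul]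
  ring


lemma cos_lt_one_of_mem (k : ℝ) (hk : k ∈ Ioc (-π) π) (h0 : k ≠ 0) : Real.cos k < 1 := by
  have hsin : Real.sin (k/2) ≠ 0 := by
    rcases lt_or_gt_of_ne h0 with h | h
    · exact (Real.sin_neg_of_neg_of_neg_pi_lt (by linarith)
        (by linarith [hk.1, Real.pi_pos])).ne
    · exact (Real.sin_pos_of_pos_of_lt_pi (by linarith)
        (by linarith [hk.2, Real.pi_pos])).ne'
  have h2 : 0 < Real.sin (k/2)^2 := by positivity
  have h3 := Real.sin_sq_eq_half_sub (k/2)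
  rw [show 2*(k/2) = k by ring] at h3
  linarith

theorem critical_logZ :
    logZ (arctanh (Real.sqrt 2 - 1))
      = (1/2) * Real.log 2 + 2 * catalanG / π := by
  have hpi := Real.pi_pos
  have hle : -π ≤ π := by linarith
  have hs2 : Real.sqrt 2 ^ 2 = 2 := Real.sq_sqrt (by norm_num)
  have hs2pos : 0 < Real.sqrt 2 := Real.sqrt_pos.mpr (by norm_num)
  have hs2gt1 : 1 < Real.sqrt 2 := by nlinarith
  set K := arctanh (Real.sqrt 2 - 1) with hKdef
  have hK : 2 * K = Real.log (Real.sqrt 2 + 1) := by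
    rw [hKdef, arctanh]
    rw [show (1 + (Real.sqrt 2 - 1)) / (1 - (Real.sqrt 2 - 1)) = Real.sqrt 2 + 1 by
      rw [div_eq_iff (by nlinarith)]; nlinarith]
    ring
  have hinv : (Real.sqrt 2 + 1)⁻¹ = Real.sqrt 2 - 1 :=
    inv_eq_of_mul_eq_one_right (by nlinarith)
  have hcosh : Real.cosh (2 * K) = Real.sqrt 2 := by
    rw [hK, Real.cosh_log (by linarith), hinv]; ring
  have hsinh : Real.sinh (2 * K) = 1 := by
    rw [hK, Real.sinh_log (by linarith), hinv]; ring
  have hcoef : 2 * Real.tanh (2*K) / Real.cosh (2*K) / 2 = 1/2 := by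
    rw [Real.tanh_eq_sinh_div_cosh, hsinh, hcosh]
    have hne : Real.sqrt 2 ≠ 0 := hs2pos.ne'
    field_simp
    linarith [hs2]
  have hIcont : Continuous (fun k : ℝ => Real.arsinh |Real.sin (k/2)|) :=
    Real.continuous_arsinh.comp ((Real.continuous_sin.comp
      (continuous_id.div_const 2)).abs)
  have hI : (∫ k₁ in (-π)..π, ∫ k₂ in (-π)..π,
        Real.log (1 - 1/2 * (Real.cos k₁ + Real.cos k₂)))
      = ∫ k₁ in (-π)..π, 4*π*(Real.arsinh |Real.sin (k₁/2)| - Real.log 2) := by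
    rw [intervalIntegral.integral_of_le hle, intervalIntegral.integral_of_le hle]
    apply MeasureTheory.integral_congr_ae
    have h0 : ∀ᵐ k : ℝ ∂(volume.restrict (Ioc (-π) π)), k ≠ 0 :=
      ae_restrict_of_ae (compl_mem_ae_iff.mpr (measure_singleton 0))
    have hmem : ∀ᵐ k : ℝ ∂(volume.restrict (Ioc (-π) π)), k ∈ Ioc (-π) π :=
      ae_restrict_mem measurableSet_Ioc
    filter_upwards [h0, hmem] with k hk hkmem
    exact inner_integral' k (cos_lt_one_of_mem k hkmem hk)
  have hI2 : (∫ k in (-π)..π, 4*π*(Real.arsinh |Real.sin (k/2)| - Real.log 2))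
      = 4*π*(4*catalanG - 2*π*Real.log 2) := by
    rw [intervalIntegral.integral_const_mul]
    congr 1
    rw [intervalIntegral.integral_sub (hIcont.intervalIntegrable _ _)
      intervalIntegrable_const, outer_integral, intervalIntegral.integral_const,
      smul_eq_mul]
    ring
  have hunfold : logZ K = Real.log (2 * Real.cosh (2*K)) + (1 / (8*π^2)) *
      (∫ k₁ in (-π)..π, ∫ k₂ in (-π)..π,
        Real.log (1 - ((2 * Real.tanh (2*K) / Real.cosh (2*K)) / 2) *
          (Real.cos k₁ + Real.cos k₂))) := rfl
  rw [hunfold, hcoef, hcosh]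
  have hlog : Real.log (2 * Real.sqrt 2) = (3/2) * Real.log 2 := by
    rw [Real.log_mul (by norm_num) (by positivity), Real.log_sqrt (by norm_num)]
    ring
  rw [hI, hI2, hlog]
  have hpi2 : π ≠ 0 := ne_of_gt hpi
  field_simp
  ring
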